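/- arXiv:2201.02907 — 2 statements merged into one kernel-verified Lean document; each statement's English description precedes it below -/
import Mathlib

section
/- Let a₀, a₁ ≥ 0, k_p > 0, k_{d₁} > 8, and define A₀ = 1 + k_{d₁} + 3ω₀ + 3k_{d₁}ω₀, A₁ = a₁(1 + k_{d₁}), A₂ = a₀(1+k_{d₁}) + k_p + 3k_pω₀ + 3ω₀² + 3k_{d₁}ω₀² + ω₀³ + k_{d₁}ω₀³, A₃ = a₁k_p + 3a₁ω₀ + 3a₁k_{d₁}ω₀ + 3a₁ω₀², A₄ = a₀k_p + 3a₀ω₀ + 3a₀k_{d₁}ω₀ + 3a₀ω₀² + 3k_pω₀² + k_pω₀³. Then A₀ > 0, A₂ > 0, A₄ > 0 for all ω₀ > 0, and if a₁ > 0 there exists Ω > 0 such that for all ω₀ > Ω, the Routh–Hurwitz conditions A₁A₂ > A₀A₃ and A₁A₂A₃ > A₀A₃² + A₁²A₄ hold. -/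
/-!
Both Hurwitz determinants `A₁A₂ - A₀A₃` and `A₃(A₁A₂ - A₀A₃) - A₁²A₄` are positive multiples of
polynomials in `ω₀` (a cubic, and a quintic in which the `a₀`-terms cancel) whose leading
coefficients are positive multiples of `k_{d₁} - 8`, so both are positive for large `ω₀`.
-/

open Filter Polynomial

namespace Polynomial

variable {𝕜 : Type*} [NormedField 𝕜] [LinearOrder 𝕜] [IsStrictOrderedRing 𝕜] [OrderTopology 𝕜]

theorem eventually_pos_eval_atTop_of_coeff_pos {p : 𝕜[X]} {n : ℕ} (hn : n ≠ 0)
    (hdeg : p.natDegree ≤ n) (hcoeff : 0 < p.coeff n) : ∀ᶠ x in atTop, 0 < p.eval x := by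
  have hnat : p.natDegree = n := natDegree_eq_of_le_of_coeff_ne_zero hdeg hcoeff.ne'
  have hlead : 0 < p.leadingCoeff := by rwa [leadingCoeff, hnat]
  have hdeg_pos : 0 < p.degree := natDegree_pos_iff_degree_pos.1 (hnat ▸ Nat.pos_of_ne_zero hn)
  exact (p.tendsto_atTop_of_leadingCoeff_nonneg hdeg_pos hlead.le).eventually_gt_atTop 0

end Polynomial

theorem Filter.Eventually.exists_pos_forall_gt {P : ℝ → Prop} (h : ∀ᶠ x in atTop, P x) :
    ∃ Ω > 0, ∀ x > Ω, P x :=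
  (atTop_basis_Ioi' 0).eventually_iff.1 h

section Hurwitz

variable (a₀ kp K : ℝ)

/-- `(A₁A₂ - A₀A₃) / (a₁K)` as a polynomial in `ω₀`, where `K = 1 + k_{d₁}`. -/
noncomputable def hurwitzCubic : ℝ[X] :=
  C (K - 9) * X ^ 3 - C (6 * K + 3) * X ^ 2 - C (3 * K) * X + C (a₀ * K)

/-- `(A₃(A₁A₂ - A₀A₃) - A₁²A₄) / (a₁²K)` as a polynomial in `ω₀`. -/
noncomputable def hurwitzQuintic : ℝ[X] :=
  C (3 * (K - 9)) * X ^ 5 + C (3 * K ^ 2 - 45 * K - 9) * X ^ 4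
    - C (9 * kp + 18 * K ^ 2 + 18 * K) * X ^ 3 - C (9 * K * kp + 3 * kp + 9 * K ^ 2) * X ^ 2
    - C (3 * K * kp) * X

variable {K}

theorem eventually_pos_eval_hurwitzCubic (hK : 9 < K) :
    ∀ᶠ ω in atTop, 0 < (hurwitzCubic a₀ K).eval ω := by
  refine eventually_pos_eval_atTop_of_coeff_pos (n := 3) (by norm_num) ?_ ?_
  · unfold hurwitzCubic; compute_degree
  · simp only [hurwitzCubic, coeff_add, coeff_sub, coeff_C_mul_X_pow, coeff_C_mul_X,
      coeff_C]
    norm_num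
    linarith

theorem eventually_pos_eval_hurwitzQuintic (hK : 9 < K) :
    ∀ᶠ ω in atTop, 0 < (hurwitzQuintic kp K).eval ω := by
  refine eventually_pos_eval_atTop_of_coeff_pos (n := 5) (by norm_num) ?_ ?_
  · unfold hurwitzQuintic; compute_degree
  · simp only [hurwitzQuintic, coeff_add, coeff_sub, coeff_C_mul_X_pow, coeff_C_mul_X]
    norm_num
    linarith

end Hurwitz

theorem stmt_9_general (a₀ a₁ kp kd1 : ℝ) (ha₀ : 0 ≤ a₀)
    (hkp : 0 < kp) (hkd : 8 < kd1)
    (A₀ A₁ A₂ A₃ A₄ : ℝ → ℝ)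
    (hA₀ : ∀ ω₀, A₀ ω₀ = 1 + kd1 + 3 * ω₀ + 3 * kd1 * ω₀)
    (hA₁ : ∀ ω₀, A₁ ω₀ = a₁ * (1 + kd1))
    (hA₂ : ∀ ω₀, A₂ ω₀ = a₀ * (1 + kd1) + kp + 3 * kp * ω₀ + 3 * ω₀ ^ 2
      + 3 * kd1 * ω₀ ^ 2 + ω₀ ^ 3 + kd1 * ω₀ ^ 3)
    (hA₃ : ∀ ω₀, A₃ ω₀ = a₁ * kp + 3 * a₁ * ω₀ + 3 * a₁ * kd1 * ω₀ + 3 * a₁ * ω₀ ^ 2)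
    (hA₄ : ∀ ω₀, A₄ ω₀ = a₀ * kp + 3 * a₀ * ω₀ + 3 * a₀ * kd1 * ω₀ + 3 * a₀ * ω₀ ^ 2
      + 3 * kp * ω₀ ^ 2 + kp * ω₀ ^ 3) :
    (∀ ω₀ : ℝ, 0 < ω₀ → 0 < A₀ ω₀ ∧ 0 < A₂ ω₀ ∧ 0 < A₄ ω₀) ∧
    (0 < a₁ → ∃ Ω > 0, ∀ ω₀ > Ω,
      A₁ ω₀ * A₂ ω₀ > A₀ ω₀ * A₃ ω₀ ∧
      A₁ ω₀ * A₂ ω₀ * A₃ ω₀ > A₀ ω₀ * (A₃ ω₀) ^ 2 + (A₁ ω₀) ^ 2 * A₄ ω₀) := by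
  have hkd1 : 0 < kd1 := by linarith
  have hK : 9 < 1 + kd1 := by linarith
  refine ⟨fun ω₀ hω₀ => ⟨?_, ?_, ?_⟩, fun ha₁ => ?_⟩
  · rw [hA₀]; positivity
  · rw [hA₂]; positivity
  · rw [hA₄]; positivity
  have hΔ₂ (ω : ℝ) : A₁ ω * A₂ ω - A₀ ω * A₃ ω =
      a₁ * (1 + kd1) * (hurwitzCubic a₀ (1 + kd1)).eval ω := by
    simp only [hA₀, hA₁, hA₂, hA₃, hurwitzCubic, eval_add, eval_sub, eval_mul, eval_pow, eval_C,
      eval_X]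
    ring
  have hΔ₃ (ω : ℝ) : A₁ ω * A₂ ω * A₃ ω - (A₀ ω * A₃ ω ^ 2 + A₁ ω ^ 2 * A₄ ω) =
      a₁ ^ 2 * (1 + kd1) * (hurwitzQuintic kp (1 + kd1)).eval ω := by
    simp only [hA₀, hA₁, hA₂, hA₃, hA₄, hurwitzQuintic, eval_add, eval_sub, eval_mul, eval_pow,
      eval_C, eval_X]
    ring
  obtain ⟨Ω, hΩ, hpos⟩ := ((eventually_pos_eval_hurwitzCubic a₀ hK).and
    (eventually_pos_eval_hurwitzQuintic kp hK)).exists_pos_forall_gt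
  refine ⟨Ω, hΩ, fun ω hω => ?_⟩
  obtain ⟨hcubic, hquintic⟩ := hpos ω hω
  exact ⟨sub_pos.1 (by rw [hΔ₂]; positivity), sub_pos.1 (by rw [hΔ₃]; positivity)⟩

theorem stmt_9 (a₀ a₁ kp kd1 : ℝ) (ha₀ : 0 ≤ a₀) (ha₁ : 0 ≤ a₁)
    (hkp : 0 < kp) (hkd : 8 < kd1)
    (A₀ A₁ A₂ A₃ A₄ : ℝ → ℝ)
    (hA₀ : ∀ ω₀, A₀ ω₀ = 1 + kd1 + 3 * ω₀ + 3 * kd1 * ω₀)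
    (hA₁ : ∀ ω₀, A₁ ω₀ = a₁ * (1 + kd1))
    (hA₂ : ∀ ω₀, A₂ ω₀ = a₀ * (1 + kd1) + kp + 3 * kp * ω₀ + 3 * ω₀ ^ 2
      + 3 * kd1 * ω₀ ^ 2 + ω₀ ^ 3 + kd1 * ω₀ ^ 3)
    (hA₃ : ∀ ω₀, A₃ ω₀ = a₁ * kp + 3 * a₁ * ω₀ + 3 * a₁ * kd1 * ω₀ + 3 * a₁ * ω₀ ^ 2)
    (hA₄ : ∀ ω₀, A₄ ω₀ = a₀ * kp + 3 * a₀ * ω₀ + 3 * a₀ * kd1 * ω₀ + 3 * a₀ * ω₀ ^ 2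
      + 3 * kp * ω₀ ^ 2 + kp * ω₀ ^ 3) :
    (∀ ω₀ : ℝ, 0 < ω₀ → 0 < A₀ ω₀ ∧ 0 < A₂ ω₀ ∧ 0 < A₄ ω₀) ∧
    (0 < a₁ → ∃ Ω > 0, ∀ ω₀ > Ω,
      A₁ ω₀ * A₂ ω₀ > A₀ ω₀ * A₃ ω₀ ∧
      A₁ ω₀ * A₂ ω₀ * A₃ ω₀ > A₀ ω₀ * (A₃ ω₀) ^ 2 + (A₁ ω₀) ^ 2 * A₄ ω₀) :=
  stmt_9_general a₀ a₁ kp kd1 ha₀ hkp hkd A₀ A₁ A₂ A₃ A₄ hA₀ hA₁ hA₂ hA₃ hA₄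
end

section
/- Consider the error dynamics matrix A - L C where A is the (n+1)×(n+1) matrix with A[i][i+1] = 1 for i = 1,…,n and zeros elsewhere, C = [1, 0, …, 0], and L = [β₁, …, β_{n+1}]ᵀ with β_i = C(n+1,i)ω₀^i, ω₀ > 0. Then the characteristic polynomial of A - L C equals (s + ω₀)^{n+1}, so all eigenvalues of A - L C equal -ω₀. -/
/-!
`A - L C` is a companion matrix carrying the gains in its first column. Expanding
`det (X • 1 - (A - L C))` along the last row leaves two minors: the same matrix one size
smaller, and a triangular matrix with `-1` on its diagonal. By induction the characteristic
polynomial is `X ^ (n + 1) + ∑ βᵢ₊₁ X ^ (n - i)`, and the bandwidth gains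
`βᵢ = C(n+1, i) ω₀ ^ i` make this the binomial expansion of `(X + ω₀) ^ (n + 1)`.
-/

open Polynomial

namespace Matrix

variable {R : Type*} [CommRing R]

theorem charmatrix_submatrix {m n : Type*} [Fintype m] [DecidableEq m] [Fintype n]
    [DecidableEq n]
    (M : Matrix n n R) {f : m → n} (hf : Function.Injective f) :
    (charmatrix M).submatrix f f = charmatrix (M.submatrix f f) := by
  ext i j
  rcases eq_or_ne i j with rfl | hij
  · simp
  · simp [hij, hf.ne hij]

def colCompanion (a : ℕ → R) (n : ℕ) : Matrix (Fin (n + 1)) (Fin (n + 1)) R :=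
  of fun i j => (if (j : ℕ) = i + 1 then 1 else 0) - (if (j : ℕ) = 0 then a i else 0)

variable (a : ℕ → R)

theorem charmatrix_colCompanion_apply {n : ℕ} (i j : Fin (n + 1)) :
    charmatrix (colCompanion a n) i j =
      (if (i : ℕ) = j then X else 0) - (if (j : ℕ) = i + 1 then 1 else 0) +
        (if (j : ℕ) = 0 then C (a i) else 0) := by
  simp only [charmatrix_apply, colCompanion, of_apply, diagonal_apply, Fin.ext_iff, map_sub,
    apply_ite C, map_one, map_zero]
  split_ifs <;> first | omega | ring

theorem colCompanion_submatrix_castSucc (k : ℕ) :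
    (colCompanion a (k + 1)).submatrix Fin.castSucc Fin.castSucc = colCompanion a k := by
  ext i j
  simp [colCompanion]

theorem charmatrix_colCompanion_last (k : ℕ) (j : Fin (k + 2)) :
    charmatrix (colCompanion a (k + 1)) (Fin.last _) j =
      if j = 0 then C (a (k + 1)) else if j = Fin.last _ then X else 0 := by
  rw [charmatrix_colCompanion_apply]
  simp only [Fin.ext_iff, Fin.val_last, Fin.val_zero]
  split_ifs <;> first | omega | ring

theorem det_charmatrix_colCompanion_submatrix_succ (k : ℕ) :
    ((charmatrix (colCompanion a k)).submatrix Fin.castSucc Fin.succ).det = (-1) ^ k := by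
  have hlower :
      ((charmatrix (colCompanion a k)).submatrix Fin.castSucc Fin.succ).IsLowerTriangular := by
    intro i j hij
    have : (i : ℕ) < j := hij
    rw [submatrix_apply, charmatrix_colCompanion_apply]
    simp only [Fin.val_castSucc, Fin.val_succ]
    rw [if_neg (by omega), if_neg (by omega), if_neg (Nat.succ_ne_zero _)]
    ring
  rw [det_of_isLowerTriangular _ hlower]
  simp [charmatrix_colCompanion_apply]

theorem charpoly_colCompanion (n : ℕ) :
    (colCompanion a n).charpoly =
      X ^ (n + 1) + ∑ i ∈ Finset.range (n + 1), C (a i) * X ^ (n - i) := by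
  induction n with
  | zero => simp [charpoly, colCompanion]
  | succ k ih =>
    have h0 : (0 : Fin (k + 2)) ≠ Fin.last _ := (Fin.last_pos).ne
    have hdet_last : ((charmatrix (colCompanion a (k + 1))).submatrix Fin.castSucc
        Fin.castSucc).det = (colCompanion a k).charpoly := by
      rw [charmatrix_submatrix _ (Fin.castSucc_injective _), colCompanion_submatrix_castSucc,
        charpoly]
    have hshift : X * ∑ i ∈ Finset.range (k + 1), C (a i) * X ^ (k - i) =
        ∑ i ∈ Finset.range (k + 1), C (a i) * X ^ (k + 1 - i) := by
      rw [Finset.mul_sum]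
      refine Finset.sum_congr rfl fun i hi => ?_
      rw [Nat.sub_add_comm (Finset.mem_range_succ_iff.mp hi), pow_succ]
      ring
    rw [charpoly, det_succ_row _ (Fin.last _), Fintype.sum_eq_add _ _ h0]
    · simp only [charmatrix_colCompanion_last, if_neg h0.symm, Fin.succAbove_last,
        Fin.succAbove_zero, det_charmatrix_colCompanion_submatrix_succ, hdet_last, ih]
      rw [Finset.sum_range_succ _ (k + 1), ← hshift]
      have hsign : ((-1 : R[X]) ^ (k + 1)) * (-1) ^ (k + 1) = 1 := by
        rw [← pow_add]
        exact Even.neg_one_pow ⟨_, rfl⟩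
      simp only [Fin.val_last, Fin.val_zero, if_true, Nat.sub_self, pow_zero, mul_one,
        Even.neg_one_pow (⟨k + 1, rfl⟩ : Even (k + 1 + (k + 1)))]
      linear_combination C (a (k + 1)) * hsign
    · intro j ⟨hj0, hjl⟩
      rw [charmatrix_colCompanion_last, if_neg hj0, if_neg hjl, mul_zero, zero_mul]

theorem charpoly_colCompanion_eq_X_add_C_pow (ω : R) (n : ℕ)
    (ha : ∀ i ≤ n, a i = (n + 1).choose (i + 1) * ω ^ (i + 1)) :
    (colCompanion a n).charpoly = (X + C ω) ^ (n + 1) := by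
  rw [charpoly_colCompanion, add_comm X, add_pow, Finset.sum_range_succ' _ (n + 1),
    add_comm _ (_ * _)]
  congr 1
  · simp
  · refine Finset.sum_congr rfl fun i hi => ?_
    rw [ha i (Finset.mem_range_succ_iff.mp hi), Nat.add_sub_add_right]
    simp only [map_mul, map_pow, map_natCast]
    ring

end Matrix

theorem stmt_15_general (n : ℕ) (ω₀ : ℝ)
    (β : ℕ → ℝ) (hβ : ∀ i, 1 ≤ i → i ≤ n + 1 → β i = (n + 1).choose i * ω₀ ^ i)
    (A L : Matrix (Fin (n + 1)) (Fin (n + 1)) ℝ)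
    (hA : ∀ i j : Fin (n + 1), A i j = if (j : ℕ) = (i : ℕ) + 1 then 1 else 0)
    (hL : ∀ i j : Fin (n + 1), L i j = if (j : ℕ) = 0 then β ((i : ℕ) + 1) else 0) :
    (A - L).charpoly = (X + C ω₀) ^ (n + 1) ∧
    ∀ μ : ℝ, (A - L).charpoly.IsRoot μ → μ = -ω₀ := by
  have hAL : A - L = Matrix.colCompanion (fun i => β (i + 1)) n := by
    ext i j
    simp [hA, hL, Matrix.colCompanion]
  have hcharpoly : (A - L).charpoly = (X + C ω₀) ^ (n + 1) := by
    rw [hAL]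
    exact Matrix.charpoly_colCompanion_eq_X_add_C_pow _ ω₀ n fun i hi =>
      hβ (i + 1) (by omega) (by omega)
  refine ⟨hcharpoly, fun μ hμ => ?_⟩
  rw [hcharpoly] at hμ
  simpa [eq_neg_iff_add_eq_zero] using hμ

theorem stmt_15 (n : ℕ) (hn : 1 ≤ n) (ω₀ : ℝ) (hω : 0 < ω₀)
    (β : ℕ → ℝ) (hβ : ∀ i, 1 ≤ i → i ≤ n + 1 → β i = (n + 1).choose i * ω₀ ^ i)
    (A L : Matrix (Fin (n + 1)) (Fin (n + 1)) ℝ)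
    (hA : ∀ i j : Fin (n + 1), A i j = if (j : ℕ) = (i : ℕ) + 1 then 1 else 0)
    (hL : ∀ i j : Fin (n + 1), L i j = if (j : ℕ) = 0 then β ((i : ℕ) + 1) else 0) :
    (A - L).charpoly = (X + C ω₀) ^ (n + 1) ∧
    ∀ μ : ℝ, (A - L).charpoly.IsRoot μ → μ = -ω₀ :=
  stmt_15_general n ω₀ β hβ A L hA hL
end
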